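/- For the penalized objective E(v) = ½‖A − Σ_{r=1}^{R} T_r‖² + ¼ Σ_{s≠t} c_{st} (⟨T_s,T_t⟩ + λ_{st}/c_{st})² − ¼ Σ_{s≠t} λ_{st}²/c_{st} with all c_{st} > 0, any sublevel set {v ∈ W : E(v) ≤ ξ} restricted to the balanced set W = {v : ‖v_r^{(m)}‖ = ‖v_r^{(n)}‖ for all m,n,r} is bounded; consequently E attains its minimum on W (and hence the augmented Lagrangian subproblem min_v L(v, λ; c) always has a solution). -/

import Mathlib

open scoped BigOperators

/-- The outer product of vectors `v n ∈ ℝ^{I n}`. -/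
noncomputable def outer {N : ℕ} {I : Fin N → ℕ}
    (v : (n : Fin N) → EuclideanSpace ℝ (Fin (I n))) :
    EuclideanSpace ℝ ((n : Fin N) → Fin (I n)) :=
  (WithLp.equiv 2 _).symm (fun i => ∏ n, v n (i n))

section Helpers

variable {N : ℕ} {I : Fin N → ℕ}

lemma inner_outer (u v : (n : Fin N) → EuclideanSpace ℝ (Fin (I n))) :
    (inner ℝ (outer u) (outer v) : ℝ) = ∏ n, (inner ℝ (u n) (v n) : ℝ) := by
  simp only [PiLp.inner_apply, RCLike.inner_apply, conj_trivial, outer,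
    WithLp.equiv_symm_apply, PiLp.toLp_apply]
  rw [Fintype.prod_sum (f := fun n j => v n j * u n j)]
  simp [Finset.prod_mul_distrib]

lemma norm_outer (u : (n : Fin N) → EuclideanSpace ℝ (Fin (I n))) :
    ‖outer u‖ = ∏ n, ‖u n‖ := by
  have h := inner_outer u u
  rw [real_inner_self_eq_norm_sq] at h
  simp only [real_inner_self_eq_norm_sq] at h
  have h2 : ‖outer u‖ ^ 2 = (∏ n, ‖u n‖) ^ 2 := by rw [h, Finset.prod_pow]
  have := congrArg Real.sqrt h2
  rwa [Real.sqrt_sq (norm_nonneg _),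
    Real.sqrt_sq (Finset.prod_nonneg fun n _ => norm_nonneg _)] at this

lemma outer_smul (a : Fin N → ℝ) (u : (n : Fin N) → EuclideanSpace ℝ (Fin (I n))) :
    outer (fun n => a n • u n) = (∏ n, a n) • outer u := by
  ext i
  simp [outer, WithLp.equiv_symm_apply, PiLp.toLp_apply, Finset.prod_mul_distrib]

lemma outer_eq_zero {u : (n : Fin N) → EuclideanSpace ℝ (Fin (I n))} (n0 : Fin N)
    (h : u n0 = 0) : outer u = 0 := by
  ext i
  simp only [outer, WithLp.equiv_symm_apply, PiLp.toLp_apply, PiLp.zero_apply]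
  exact Finset.prod_eq_zero (Finset.mem_univ n0) (by simp [h])

lemma continuous_outer {R : ℕ} (r : Fin R) :
    Continuous fun (v : Fin R → (n : Fin N) → EuclideanSpace ℝ (Fin (I n))) => outer (v r) := by
  unfold outer
  refine (PiLp.continuous_toLp 2 _).comp ?_
  refine continuous_pi fun i => ?_
  refine continuous_finset_prod _ fun n _ => ?_
  exact ((continuous_apply (i n)).comp (PiLp.continuous_ofLp 2 _)).comp
    ((continuous_apply n).comp (continuous_apply r))

lemma balance (u : (n : Fin N) → EuclideanSpace ℝ (Fin (I n))) :
    ∃ w : (n : Fin N) → EuclideanSpace ℝ (Fin (I n)),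
      (∀ m n, ‖w m‖ = ‖w n‖) ∧ outer w = outer u := by
  by_cases hz : ∃ n0, u n0 = 0
  · obtain ⟨n0, h⟩ := hz
    refine ⟨0, by simp, ?_⟩
    rw [outer_eq_zero n0 h, outer_eq_zero n0 rfl]
  · push_neg at hz
    rcases Nat.eq_zero_or_pos N with hN | hN
    · exact ⟨u, fun m => absurd m.isLt (by omega), rfl⟩
    · have hP : 0 < ∏ n, ‖u n‖ := Finset.prod_pos fun n _ => norm_pos_iff.mpr (hz n)
      set P := ∏ n, ‖u n‖ with hPdef
      set b := P ^ ((N : ℝ)⁻¹) with hbdef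
      have hb : 0 < b := Real.rpow_pos_of_pos hP _
      have key : ∀ k, ‖b / ‖u k‖‖ * ‖u k‖ = b := fun k => by
        rw [Real.norm_eq_abs, abs_of_nonneg (div_nonneg hb.le (norm_nonneg _)),
          div_mul_cancel₀ _ (norm_ne_zero_iff.mpr (hz k))]
      refine ⟨fun n => (b / ‖u n‖) • u n,
        fun m n => by rw [norm_smul, norm_smul, key, key], ?_⟩
      rw [outer_smul]
      have hcoef : (∏ n, b / ‖u n‖) = 1 := by
        rw [Finset.prod_div_distrib, Finset.prod_const, ← hPdef]
        have hbN : b ^ N = P := by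
          rw [hbdef, ← Real.rpow_natCast (P ^ ((N : ℝ)⁻¹)) N, ← Real.rpow_mul hP.le,
            inv_mul_cancel₀ (by exact_mod_cast hN.ne'), Real.rpow_one]
        rw [Finset.card_univ, Fintype.card_fin, hbN, div_self hP.ne']
      rw [hcoef, one_smul]

end Helpers

/-- The augmented Lagrangian subproblem always has a solution: with all penalty
parameters `c s t > 0`, every sublevel set of the penalized objective `E`
restricted to the balanced set `W = {v : ‖v_r^{(m)}‖ = ‖v_r^{(n)}‖ ∀ m,n,r}` is
bounded, and `E` attains on `W` its global minimum (over all `v`). -/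
theorem augmented_lagrangian_subproblem_has_solution {N R : ℕ} {I : Fin N → ℕ}
    (A : EuclideanSpace ℝ ((n : Fin N) → Fin (I n)))
    (lam c : Fin R → Fin R → ℝ)
    (hlam : ∀ s t, lam s t = lam t s)
    (hcsymm : ∀ s t, c s t = c t s)
    (hcpos : ∀ s t, s ≠ t → 0 < c s t)
    (E : (Fin R → (n : Fin N) → EuclideanSpace ℝ (Fin (I n))) → ℝ)
    (hE : ∀ v, E v =
      (1 / 2) * ‖A - ∑ r, outer (v r)‖ ^ 2
      + (1 / 4) * ∑ s, ∑ t ∈ Finset.univ.erase s, c s t *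
          ((inner ℝ (outer (v s)) (outer (v t)) : ℝ) + lam s t / c s t) ^ 2
      - (1 / 4) * ∑ s, ∑ t ∈ Finset.univ.erase s, (lam s t) ^ 2 / c s t)
    (W : Set (Fin R → (n : Fin N) → EuclideanSpace ℝ (Fin (I n))))
    (hW : W = {v | ∀ (m n : Fin N) (r : Fin R), ‖v r m‖ = ‖v r n‖}) :
    (∀ ξ : ℝ, Bornology.IsBounded {v ∈ W | E v ≤ ξ}) ∧
      ∃ v₀ ∈ W, ∀ v, E v₀ ≤ E v := by
  subst hW
  -- Boundedness of all sublevel sets restricted to W.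
  have hbdd : ∀ ξ : ℝ, Bornology.IsBounded
      {v ∈ {v : Fin R → (n : Fin N) → EuclideanSpace ℝ (Fin (I n)) |
        ∀ (m n : Fin N) (r : Fin R), ‖v r m‖ = ‖v r n‖} | E v ≤ ξ} := by
    intro ξ
    rcases Nat.eq_zero_or_pos N with hN0 | hN0
    · -- `N = 0`: the whole space is a subsingleton.
      refine (Set.finite_singleton
        (0 : Fin R → (n : Fin N) → EuclideanSpace ℝ (Fin (I n)))).isBounded.subset
        fun v _ => ?_
      have : v = 0 := by
        funext r n
        exact absurd n.isLt (by omega)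
      simp [this]
    · set K := (1/4 : ℝ) * ∑ s, ∑ t ∈ Finset.univ.erase s, (lam s t)^2 / c s t with hK
      set ξ' := ξ + K with hξ'
      set B := ‖A‖ + Real.sqrt (2 * ξ') with hB
      set D : Fin R → Fin R → ℝ :=
        fun s t => Real.sqrt (4 * ξ' / c s t) + |lam s t / c s t| with hD
      set C := B^2 + ∑ s, ∑ t ∈ Finset.univ.erase s, D s t with hC
      set M := max 1 C with hM
      rw [isBounded_iff_forall_norm_le]
      refine ⟨M, fun v hv => ?_⟩
      obtain ⟨hvW, hvE⟩ := hv
      rw [hE v] at hvE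
      set T : Fin R → EuclideanSpace ℝ ((n : Fin N) → Fin (I n)) :=
        fun r => outer (v r) with hT
      have hTr : ∀ r, outer (v r) = T r := fun r => rfl
      simp only [hTr] at hvE
      have hQ : ∀ s : Fin R, ∀ t ∈ Finset.univ.erase s,
          (0:ℝ) ≤ c s t * ((inner ℝ (T s) (T t) : ℝ) + lam s t / c s t)^2 := by
        intro s t ht
        exact mul_nonneg (hcpos s t (Finset.ne_of_mem_erase ht).symm).le (sq_nonneg _)
      have hQsum : (0:ℝ) ≤ ∑ s, ∑ t ∈ Finset.univ.erase s,
          c s t * ((inner ℝ (T s) (T t) : ℝ) + lam s t / c s t)^2 :=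
        Finset.sum_nonneg fun s _ => Finset.sum_nonneg (hQ s)
      have h1 : (1/2 : ℝ) * ‖A - ∑ r, T r‖^2
          + (1/4) * ∑ s, ∑ t ∈ Finset.univ.erase s,
            c s t * ((inner ℝ (T s) (T t) : ℝ) + lam s t / c s t)^2 ≤ ξ' := by
        rw [hξ', hK]; linarith [hvE]
      have hnsq : (0:ℝ) ≤ ‖A - ∑ r, T r‖^2 := sq_nonneg _
      have hTB : ‖∑ r, T r‖ ≤ B := by
        have h2 : ‖A - ∑ r, T r‖ ≤ Real.sqrt (2 * ξ') :=
          Real.le_sqrt_of_sq_le (by linarith)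
        calc ‖∑ r, T r‖ = ‖A - (A - ∑ r, T r)‖ := by rw [sub_sub_cancel]
          _ ≤ ‖A‖ + ‖A - ∑ r, T r‖ := norm_sub_le _ _
          _ ≤ B := by rw [hB]; linarith
      have hDbound : ∀ s : Fin R, ∀ t ∈ Finset.univ.erase s,
          |(inner ℝ (T s) (T t) : ℝ)| ≤ D s t := by
        intro s t ht
        have hst : s ≠ t := (Finset.ne_of_mem_erase ht).symm
        have hc := hcpos s t hst
        have hle : c s t * ((inner ℝ (T s) (T t) : ℝ) + lam s t / c s t)^2
            ≤ ∑ s', ∑ t' ∈ Finset.univ.erase s',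
              c s' t' * ((inner ℝ (T s') (T t') : ℝ) + lam s' t' / c s' t')^2 := by
          calc c s t * ((inner ℝ (T s) (T t) : ℝ) + lam s t / c s t)^2
              ≤ ∑ t' ∈ Finset.univ.erase s,
                c s t' * ((inner ℝ (T s) (T t') : ℝ) + lam s t' / c s t')^2 :=
                Finset.single_le_sum (hQ s) ht
            _ ≤ _ := Finset.single_le_sum
                (fun s' _ => Finset.sum_nonneg (hQ s')) (Finset.mem_univ s)
        have hterm : c s t * ((inner ℝ (T s) (T t) : ℝ) + lam s t / c s t)^2 ≤ 4 * ξ' := by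
          linarith
        have hsq : ((inner ℝ (T s) (T t) : ℝ) + lam s t / c s t)^2 ≤ 4 * ξ' / c s t := by
          rw [le_div_iff₀ hc]; linarith [hterm]
        have habs : |(inner ℝ (T s) (T t) : ℝ) + lam s t / c s t|
            ≤ Real.sqrt (4 * ξ' / c s t) := Real.abs_le_sqrt hsq
        have h3 := abs_add_le ((inner ℝ (T s) (T t) : ℝ) + lam s t / c s t) (-(lam s t / c s t))
        rw [add_neg_cancel_right, abs_neg] at h3
        calc |(inner ℝ (T s) (T t) : ℝ)|
            ≤ |(inner ℝ (T s) (T t) : ℝ) + lam s t / c s t| + |lam s t / c s t| := h3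
          _ ≤ D s t := by rw [hD]; exact add_le_add_left habs _
      have hexp : ‖∑ r, T r‖^2 = ∑ s, ∑ t, (inner ℝ (T s) (T t) : ℝ) := by
        rw [← real_inner_self_eq_norm_sq, sum_inner]
        exact Finset.sum_congr rfl fun s _ => inner_sum _ _ _
      have hsplit : ∑ s, ∑ t, (inner ℝ (T s) (T t) : ℝ)
          = ∑ r, ‖T r‖^2 + ∑ s, ∑ t ∈ Finset.univ.erase s, (inner ℝ (T s) (T t) : ℝ) := by
        rw [← Finset.sum_add_distrib]
        refine Finset.sum_congr rfl fun s _ => ?_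
        rw [← Finset.sum_erase_add _ _ (Finset.mem_univ s), real_inner_self_eq_norm_sq,
          add_comm]
      have h4 : -(∑ s, ∑ t ∈ Finset.univ.erase s, D s t)
          ≤ ∑ s, ∑ t ∈ Finset.univ.erase s, (inner ℝ (T s) (T t) : ℝ) := by
        rw [← Finset.sum_neg_distrib]
        refine Finset.sum_le_sum fun s _ => ?_
        rw [← Finset.sum_neg_distrib]
        refine Finset.sum_le_sum fun t ht => ?_
        have := hDbound s t ht
        have := neg_abs_le ((inner ℝ (T s) (T t) : ℝ))
        linarith
      have h5 : ‖∑ r, T r‖^2 ≤ B^2 := by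
        have h0 : (0:ℝ) ≤ ‖∑ r, T r‖ := norm_nonneg _
        nlinarith [hTB]
      have hsumsq : ∑ r, ‖T r‖^2 ≤ C := by
        rw [hC]
        have := hexp
        linarith [hsplit, h4, h5, hexp]
      have hone : ∀ (r : Fin R) (n1 : Fin N), ‖v r n1‖ ≤ M := by
        intro r n1
        have hb : ∀ n, ‖v r n‖ = ‖v r n1‖ := fun n => hvW n n1 r
        have hTrn : ‖T r‖ = ‖v r n1‖ ^ N := by
          show ‖outer (v r)‖ = _
          rw [norm_outer, Finset.prod_congr rfl fun n _ => hb n, Finset.prod_const,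
            Finset.card_univ, Fintype.card_fin]
        have hsq : (‖v r n1‖ ^ N)^2 ≤ C := by
          have h6 : ‖T r‖^2 ≤ ∑ r', ‖T r'‖^2 :=
            Finset.single_le_sum (f := fun r' => ‖T r'‖^2)
              (fun r' _ => sq_nonneg _) (Finset.mem_univ r)
          rw [hTrn] at h6
          linarith [hsumsq]
        by_cases hle : ‖v r n1‖ ≤ 1
        · exact hle.trans (le_max_left 1 C)
        · push_neg at hle
          have h1b : (1:ℝ) ≤ ‖v r n1‖ := hle.le
          have h1bN : (1:ℝ) ≤ ‖v r n1‖ ^ N := one_le_pow₀ h1b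
          have hchain : ‖v r n1‖ ≤ (‖v r n1‖ ^ N)^2 := by
            calc ‖v r n1‖ ≤ ‖v r n1‖ ^ N := le_self_pow₀ h1b (by omega)
              _ ≤ (‖v r n1‖ ^ N)^2 := le_self_pow₀ h1bN (by norm_num)
          exact (hchain.trans hsq).trans (le_max_right 1 C)
      have hM0 : (0:ℝ) ≤ M := le_trans zero_le_one (le_max_left _ _)
      rw [pi_norm_le_iff_of_nonneg hM0]
      intro r
      rw [pi_norm_le_iff_of_nonneg hM0]
      intro n1
      exact hone r n1
  refine ⟨hbdd, ?_⟩
  -- Existence of a global minimizer on W.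
  have h0W : (0 : Fin R → (n : Fin N) → EuclideanSpace ℝ (Fin (I n))) ∈
      {v : Fin R → (n : Fin N) → EuclideanSpace ℝ (Fin (I n)) |
        ∀ (m n : Fin N) (r : Fin R), ‖v r m‖ = ‖v r n‖} := fun m n r => by simp
  have hEcont : Continuous E := by
    have hEfun : E = fun v =>
        (1 / 2) * ‖A - ∑ r, outer (v r)‖ ^ 2
        + (1 / 4) * ∑ s, ∑ t ∈ Finset.univ.erase s, c s t *
            ((inner ℝ (outer (v s)) (outer (v t)) : ℝ) + lam s t / c s t) ^ 2
        - (1 / 4) * ∑ s, ∑ t ∈ Finset.univ.erase s, (lam s t) ^ 2 / c s t := funext hE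
    rw [hEfun]
    refine Continuous.sub (Continuous.add ?_ ?_) continuous_const
    · exact continuous_const.mul
        (((continuous_const.sub
          (continuous_finset_sum _ fun r _ => continuous_outer r)).norm).pow 2)
    · refine continuous_const.mul (continuous_finset_sum _ fun s _ =>
        continuous_finset_sum _ fun t _ => ?_)
      exact continuous_const.mul
        ((((continuous_outer s).inner (continuous_outer t)).add continuous_const).pow 2)
  have hWclosed : IsClosed {v : Fin R → (n : Fin N) → EuclideanSpace ℝ (Fin (I n)) |
      ∀ (m n : Fin N) (r : Fin R), ‖v r m‖ = ‖v r n‖} := by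
    have heq : {v : Fin R → (n : Fin N) → EuclideanSpace ℝ (Fin (I n)) |
        ∀ (m n : Fin N) (r : Fin R), ‖v r m‖ = ‖v r n‖}
        = ⋂ (m : Fin N) (n : Fin N) (r : Fin R),
          {v : Fin R → (n : Fin N) → EuclideanSpace ℝ (Fin (I n)) | ‖v r m‖ = ‖v r n‖} := by
      ext v; simp only [Set.mem_iInter, Set.mem_setOf_eq]
    rw [heq]
    refine isClosed_iInter fun m => isClosed_iInter fun n => isClosed_iInter fun r => ?_
    exact isClosed_eq (((continuous_apply m).comp (continuous_apply r)).norm)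
      (((continuous_apply n).comp (continuous_apply r)).norm)
  have hSclosed : IsClosed {v ∈ {v : Fin R → (n : Fin N) → EuclideanSpace ℝ (Fin (I n)) |
      ∀ (m n : Fin N) (r : Fin R), ‖v r m‖ = ‖v r n‖} | E v ≤ E 0} :=
    hWclosed.inter (isClosed_le hEcont continuous_const)
  have hScpt : IsCompact {v ∈ {v : Fin R → (n : Fin N) → EuclideanSpace ℝ (Fin (I n)) |
      ∀ (m n : Fin N) (r : Fin R), ‖v r m‖ = ‖v r n‖} | E v ≤ E 0} :=
    Metric.isCompact_of_isClosed_isBounded hSclosed (hbdd (E 0))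
  have hSne : Set.Nonempty {v ∈ {v : Fin R → (n : Fin N) → EuclideanSpace ℝ (Fin (I n)) |
      ∀ (m n : Fin N) (r : Fin R), ‖v r m‖ = ‖v r n‖} | E v ≤ E 0} :=
    ⟨0, h0W, le_refl _⟩
  obtain ⟨v₀, hv₀, hmin⟩ := hScpt.exists_isMinOn hSne hEcont.continuousOn
  refine ⟨v₀, hv₀.1, fun v => ?_⟩
  choose w hw1 hw2 using fun r => balance (v r)
  have hwW : w ∈ {v : Fin R → (n : Fin N) → EuclideanSpace ℝ (Fin (I n)) |
      ∀ (m n : Fin N) (r : Fin R), ‖v r m‖ = ‖v r n‖} := fun m n r => hw1 r m n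
  have hEw : E w = E v := by
    rw [hE w, hE v]
    simp only [hw2]
  by_cases hcase : E w ≤ E 0
  · exact (isMinOn_iff.mp hmin w ⟨hwW, hcase⟩).trans hEw.le
  · have h2 : E v₀ ≤ E 0 := isMinOn_iff.mp hmin 0 ⟨h0W, le_refl _⟩
    exact h2.trans ((not_le.mp hcase).le.trans hEw.le)
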